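/- arXiv:1705.07009 — 4 statements merged into one kernel-verified Lean document; each statement's English description precedes it below -/
import Mathlib

section
/- Let γ>0 and t₀∈ℝ. Let H:[t₀,∞)→ℝ be C¹ with H(t)>0 for all t, and let Σ, ρ, S̄:[t₀,∞)→ℝ be continuous nonnegative functions such that for all t≥t₀: H'(t) = −½Σ(t) − (1/6)S̄(t) − ½ρ(t), and 9H(t)² = (3/2)Σ(t) + 3ρ(t) + 9γ². If H(t₀) < √(7/6)·γ, then for all t≥t₀ one has H(t)≥γ and F(t) := Σ(t)/(4H(t)²) < 1/4. -/
/-!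
The right-hand side of the evolution equation is nonpositive, so `H` is nonincreasing and
`H² < (7/6)γ²` persists. The constraint gives `9H² ≥ 9γ²`, hence `H ≥ γ`, and
`Σ ≤ 6(H² - γ²) < 6H² - (36/7)H² < H²`, i.e. `F < 1/4`.
-/

theorem antitoneOn_of_hasDerivWithinAt_nonpos_of_convex {D : Set ℝ} (hD : Convex ℝ D)
    {f f' : ℝ → ℝ} (hf : ∀ x ∈ D, HasDerivWithinAt f (f' x) D x) (hf'₀ : ∀ x ∈ D, f' x ≤ 0) :
    AntitoneOn f D :=
  antitoneOn_of_hasDerivWithinAt_nonpos hD (fun x hx ↦ (hf x hx).continuousWithinAt)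
    (fun x hx ↦ (hf x (interior_subset hx)).mono interior_subset)
    (fun x hx ↦ hf'₀ x (interior_subset hx))

theorem sq_lt_of_lt_sqrt_mul {x a γ : ℝ} (hx : 0 ≤ x) (ha : 0 ≤ a) (h : x < √a * γ) :
    x ^ 2 < a * γ ^ 2 := by
  calc x ^ 2 < (√a * γ) ^ 2 := pow_lt_pow_left₀ h hx two_ne_zero
    _ = a * γ ^ 2 := by rw [mul_pow, Real.sq_sqrt ha]

theorem le_and_scaledShear_lt_of_constraint {γ H Sig rho : ℝ} (hH : 0 < H) (hSig : 0 ≤ Sig)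
    (hrho : 0 ≤ rho) (hcon : 9 * H ^ 2 = (3/2) * Sig + 3 * rho + 9 * γ ^ 2)
    (hH2 : H ^ 2 < (7/6) * γ ^ 2) :
    γ ≤ H ∧ Sig / (4 * H ^ 2) < 1/4 := by
  refine ⟨abs_le_of_sq_le_sq' (by linarith) hH.le |>.2, ?_⟩
  rw [div_lt_iff₀ (by positivity)]
  linarith [pow_pos hH 2]

theorem shear_bound_of_constraint_general
    (γ t₀ : ℝ) (H Sig rho Sbar : ℝ → ℝ)
    (hHpos : ∀ t ∈ Set.Ici t₀, 0 < H t)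
    (hSig : ∀ t ∈ Set.Ici t₀, 0 ≤ Sig t)
    (hrho : ∀ t ∈ Set.Ici t₀, 0 ≤ rho t)
    (hSbar : ∀ t ∈ Set.Ici t₀, 0 ≤ Sbar t)
    (hH' : ∀ t ∈ Set.Ici t₀,
      HasDerivWithinAt H (-(1/2) * Sig t - (1/6) * Sbar t - (1/2) * rho t) (Set.Ici t₀) t)
    (hcon : ∀ t ∈ Set.Ici t₀, 9 * (H t)^2 = (3/2) * Sig t + 3 * rho t + 9 * γ^2)
    (hH0 : H t₀ < Real.sqrt (7/6) * γ) :
    ∀ t ∈ Set.Ici t₀, γ ≤ H t ∧ Sig t / (4 * (H t)^2) < 1/4 := by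
  have hanti : AntitoneOn H (Set.Ici t₀) :=
    antitoneOn_of_hasDerivWithinAt_nonpos_of_convex (convex_Ici t₀) hH' fun t ht ↦ by
      linarith [hSig t ht, hSbar t ht, hrho t ht]
  intro t ht
  have hHt : H t < √(7/6) * γ := (hanti Set.self_mem_Ici ht ht).trans_lt hH0
  exact le_and_scaledShear_lt_of_constraint (hHpos t ht) (hSig t ht) (hrho t ht) (hcon t ht)
    (sq_lt_of_lt_sqrt_mul (hHpos t ht).le (by norm_num) hHt)

/-- **ODE content of the Hamiltonian-constraint argument** (Lemma on the scaled shear `F`):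
if `H' = -Σ/2 - S̄/6 - ρ/2`, `9H² = (3/2)Σ + 3ρ + 9γ²`, and `H(t₀) < √(7/6)γ`,
then `H ≥ γ` and `F = Σ/(4H²) < 1/4` on `[t₀,∞)`. -/
theorem shear_bound_of_constraint
    (γ t₀ : ℝ) (hγ : 0 < γ) (H Sig rho Sbar : ℝ → ℝ)
    (hHpos : ∀ t ∈ Set.Ici t₀, 0 < H t)
    (hSig : ∀ t ∈ Set.Ici t₀, 0 ≤ Sig t)
    (hrho : ∀ t ∈ Set.Ici t₀, 0 ≤ rho t)
    (hSbar : ∀ t ∈ Set.Ici t₀, 0 ≤ Sbar t)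
    (hSigc : ContinuousOn Sig (Set.Ici t₀))
    (hrhoc : ContinuousOn rho (Set.Ici t₀))
    (hSbarc : ContinuousOn Sbar (Set.Ici t₀))
    (hH' : ∀ t ∈ Set.Ici t₀,
      HasDerivWithinAt H (-(1/2) * Sig t - (1/6) * Sbar t - (1/2) * rho t) (Set.Ici t₀) t)
    (hcon : ∀ t ∈ Set.Ici t₀, 9 * (H t)^2 = (3/2) * Sig t + 3 * rho t + 9 * γ^2)
    (hH0 : H t₀ < Real.sqrt (7/6) * γ) :
    ∀ t ∈ Set.Ici t₀, γ ≤ H t ∧ Sig t / (4 * (H t)^2) < 1/4 :=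
  shear_bound_of_constraint_general γ t₀ H Sig rho Sbar hHpos hSig hrho hSbar hH' hcon hH0
end

section
/- For every c₀≥1 there is a constant C>0, depending only on c₀, with the following property. Let R>0 and let g be a symmetric positive-definite real 3×3 matrix such that (1/c₀)R^{−2}|v|² ≤ vᵀg^{−1}v ≤ c₀R^{−2}|v|² for all v∈ℝ³. For x∈ℝ³ write x⁰=√(1+xᵀg^{−1}x). Then for all p,q,p',q'∈ℝ³ satisfying the collision conservation laws p'+q'=p+q and p'⁰+q'⁰=p⁰+q⁰, one has √(1+|p|²) ≤ C·√(1+|p'|²)·√(1+|q'|²). -/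
/-!
Writing `Q x = xᵀg⁻¹x`, the energy of `q` is at least the rest mass `1`, so
`√(1 + Q p) ≤ p'⁰ + q'⁰ - 1`. The function `a ↦ √(1 + a)` is subadditive up to that rest
mass, `√(1 + a) + √(1 + b) ≤ 1 + √(1 + 2(a + b))`, hence `Q p ≤ 2 (Q p' + Q q')` with no
additive constant. This homogeneity is what makes the constant independent of `R`: comparing
`Q` with `R⁻²|·|²` in both directions gives `|p|² ≤ 2c₀²(|p'|² + |q'|²)`.
-/

open Matrix

lemma sqrt_one_add_add_sqrt_one_add_le {a b : ℝ} (ha : 0 ≤ a) (hb : 0 ≤ b) :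
    √(1 + a) + √(1 + b) ≤ 1 + √(1 + 2 * (a + b)) := by
  set u := √(1 + a)
  set v := √(1 + b)
  have hu : u ^ 2 = 1 + a := Real.sq_sqrt (by positivity)
  have hv : v ^ 2 = 1 + b := Real.sq_sqrt (by positivity)
  have hu1 : 1 ≤ u := Real.one_le_sqrt.2 (by linarith)
  have hv1 : 1 ≤ v := Real.one_le_sqrt.2 (by linarith)
  -- `2(u-1)(v-1) ≤ (u-1)² + (v-1)² ≤ (u²-1) + (v²-1) = a + b`
  rw [← sub_le_iff_le_add', Real.le_sqrt (by linarith) (by positivity)]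
  nlinarith [sq_nonneg (u - v)]

lemma le_two_mul_add_of_sqrt_one_add_add_eq {A B a b : ℝ} (hB : 0 ≤ B) (ha : 0 ≤ a) (hb : 0 ≤ b)
    (h : √(1 + a) + √(1 + b) = √(1 + A) + √(1 + B)) : A ≤ 2 * (a + b) := by
  have hB1 : 1 ≤ √(1 + B) := Real.one_le_sqrt.2 (by linarith)
  have hA : √(1 + A) ≤ √(1 + 2 * (a + b)) := by
    linarith [sqrt_one_add_add_sqrt_one_add_le ha hb]
  linarith [(Real.sqrt_le_sqrt_iff (by positivity)).1 hA]

lemma sqrt_one_add_le_sqrt_mul_sqrt_one_add_mul_sqrt_one_add {k x y z : ℝ} (hk : 1 ≤ k)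
    (hx : 0 ≤ x) (hy : 0 ≤ y) (hz : z ≤ k * (x + y)) :
    √(1 + z) ≤ √k * √(1 + x) * √(1 + y) := by
  rw [← Real.sqrt_mul (by positivity), ← Real.sqrt_mul (by positivity)]
  gcongr
  nlinarith [mul_nonneg hx hy]

lemma dotProduct_self_nonneg {n R : Type*} [Fintype n] [Ring R] [LinearOrder R]
    [IsStrictOrderedRing R] (v : n → R) : 0 ≤ v ⬝ᵥ v :=
  Finset.sum_nonneg fun i _ => mul_self_nonneg (v i)

/-- **Collision estimate `⟨p⟩ ≤ C⟨p'⟩⟨q'⟩`**: for every `c₀ ≥ 1` there is `C > 0`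
(depending only on `c₀`) such that whenever `R > 0` and `g` is a symmetric
positive-definite metric with `(1/c₀)R⁻²|v|² ≤ vᵀg⁻¹v ≤ c₀R⁻²|v|²`, any momenta
`p, q, p', q'` obeying the conservation laws `p' + q' = p + q` and
`p'⁰ + q'⁰ = p⁰ + q⁰` (with `x⁰ = √(1 + xᵀg⁻¹x)`) satisfy
`√(1+|p|²) ≤ C √(1+|p'|²) √(1+|q'|²)`. -/
theorem weight_le_of_collision (c₀ : ℝ) (hc₀ : 1 ≤ c₀) :
    ∃ C > 0, ∀ (R : ℝ), 0 < R → ∀ g : Matrix (Fin 3) (Fin 3) ℝ, g.IsSymm → g.PosDef →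
      (∀ v : Fin 3 → ℝ,
          (v ⬝ᵥ v) / (c₀ * R^2) ≤ v ⬝ᵥ (g⁻¹ *ᵥ v)
          ∧ v ⬝ᵥ (g⁻¹ *ᵥ v) ≤ c₀ * (v ⬝ᵥ v) / R^2) →
      ∀ p q p' q' : Fin 3 → ℝ,
        p' + q' = p + q →
        Real.sqrt (1 + p' ⬝ᵥ (g⁻¹ *ᵥ p')) + Real.sqrt (1 + q' ⬝ᵥ (g⁻¹ *ᵥ q'))
          = Real.sqrt (1 + p ⬝ᵥ (g⁻¹ *ᵥ p)) + Real.sqrt (1 + q ⬝ᵥ (g⁻¹ *ᵥ q)) →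
        Real.sqrt (1 + p ⬝ᵥ p)
          ≤ C * Real.sqrt (1 + p' ⬝ᵥ p') * Real.sqrt (1 + q' ⬝ᵥ q') := by
  refine ⟨√(2 * c₀ ^ 2), by positivity, ?_⟩
  intro R hR g _ _ hg p q p' q' _ henergy
  have hQ_nonneg (v : Fin 3 → ℝ) : 0 ≤ v ⬝ᵥ (g⁻¹ *ᵥ v) :=
    (div_nonneg (dotProduct_self_nonneg v) (by positivity)).trans (hg v).1
  have hQ := le_two_mul_add_of_sqrt_one_add_add_eq (hQ_nonneg q) (hQ_nonneg p') (hQ_nonneg q')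
    henergy
  refine sqrt_one_add_le_sqrt_mul_sqrt_one_add_mul_sqrt_one_add (by nlinarith)
    (dotProduct_self_nonneg p') (dotProduct_self_nonneg q') ?_
  calc p ⬝ᵥ p ≤ c₀ * R ^ 2 * (p ⬝ᵥ (g⁻¹ *ᵥ p)) := (div_le_iff₀' (by positivity)).1 (hg p).1
    _ ≤ c₀ * R ^ 2 * (2 * (c₀ * (p' ⬝ᵥ p') / R ^ 2 + c₀ * (q' ⬝ᵥ q') / R ^ 2)) := by
      gcongr
      linarith [(hg p').2, (hg q').2]
    _ = 2 * c₀ ^ 2 * (p' ⬝ᵥ p' + q' ⬝ᵥ q') := by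
      field_simp
end

section
/- For every multi-index A∈ℕ³ there is a constant C>0 such that for all p,q∈ℝ³, |∂^A_p [s(p,q)^{−1/2}]| ≤ C (q⁰)^{|A|} · s(p,q)^{−1/2}, where the derivatives are taken in the variable p. -/
/-!
With `p⁰ = √(1 + |p|²)` and the velocity `v(p) = p / p⁰` one has `s = 2 + 2 (p⁰ q⁰ - p · q)`,
hence `∂_{p_i} s = 2 q⁰ (v_i(p) - v_i(q))`: differentiating in `p` costs one factor `q⁰` and
otherwise produces functions bounded uniformly in `p` and `q`. To make this precise, consider the
algebra of families `(q, p) ↦ g q p` generated by `s⁻¹`, `1/q⁰`, `1/p⁰`, `v(q)` and `v(p)`, all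
bounded by `1`. It is stable under the rescaled derivative `(q⁰)⁻¹ ∂_{p_i}` (the factor `1/q⁰` is
needed because derivatives of the `p`-dependent generators carry no `q⁰`), so by induction
`∂^A s^{-1/2} = (q⁰)^{|A|} s^{-1/2} g` for some `g` in this algebra.
-/

open Matrix

noncomputable section

/-- First-order partial derivative in the momentum variable `p_i`. -/
def pd (i : Fin 3) (f : (Fin 3 → ℝ) → ℝ) : (Fin 3 → ℝ) → ℝ :=
  fun p => fderiv ℝ f p (Pi.single i 1)

/-- Mixed partial derivative `∂^A` for a multi-index `A ∈ ℕ³`. -/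
def multiDeriv (A : Fin 3 → ℕ) (f : (Fin 3 → ℝ) → ℝ) : (Fin 3 → ℝ) → ℝ :=
  (pd 0)^[A 0] ((pd 1)^[A 1] ((pd 2)^[A 2] f))

/-- Total energy `s(p,q) = (p⁰+q⁰)² − |p+q|²` with `p⁰ = √(1+|p|²)` (orthonormal frame). -/
def sTot (p q : Fin 3 → ℝ) : ℝ :=
  (Real.sqrt (1 + p ⬝ᵥ p) + Real.sqrt (1 + q ⬝ᵥ q))^2 - (p + q) ⬝ᵥ (p + q)

def energy {ι : Type*} [Fintype ι] (p : ι → ℝ) : ℝ := √(1 + p ⬝ᵥ p)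

def velocity {ι : Type*} [Fintype ι] (p : ι → ℝ) (j : ι) : ℝ := p j / energy p

section Energy

variable {ι : Type*} [Fintype ι] (p q : ι → ℝ)

lemma dotProduct_self_nonneg_s10 : 0 ≤ p ⬝ᵥ p := by
  simpa using dotProduct_self_star_nonneg p

lemma one_add_dotProduct_self_pos : 0 < 1 + p ⬝ᵥ p := by
  linarith [dotProduct_self_nonneg_s10 p]

lemma energy_sq : energy p ^ 2 = 1 + p ⬝ᵥ p :=
  Real.sq_sqrt (one_add_dotProduct_self_pos p).le

lemma one_le_energy : 1 ≤ energy p :=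
  Real.one_le_sqrt.2 (by linarith [dotProduct_self_nonneg_s10 p])

lemma energy_pos : 0 < energy p := one_pos.trans_le (one_le_energy p)

lemma abs_le_energy (j : ι) : |p j| ≤ energy p := by
  refine Real.abs_le_sqrt ?_
  have : p j * p j ≤ p ⬝ᵥ p :=
    Finset.single_le_sum (fun k _ => mul_self_nonneg (p k)) (Finset.mem_univ j)
  nlinarith

lemma abs_velocity_le_one (j : ι) : |velocity p j| ≤ 1 := by
  rw [velocity, abs_div, abs_of_pos (energy_pos p), div_le_one (energy_pos p)]
  exact abs_le_energy p j

lemma abs_inv_energy_le_one : |(energy p)⁻¹| ≤ 1 := by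
  rw [abs_inv, abs_of_pos (energy_pos p)]
  exact inv_le_one_of_one_le₀ (one_le_energy p)

lemma one_add_dotProduct_le_energy_mul : 1 + p ⬝ᵥ q ≤ energy p * energy q := by
  -- `(1 + p ⬝ᵥ q)² ≤ (1 + p ⬝ᵥ p) (1 + q ⬝ᵥ q)` is Cauchy–Schwarz for `(1, p)` and `(1, q)`
  have hCS : (p ⬝ᵥ q) ^ 2 ≤ (p ⬝ᵥ p) * (q ⬝ᵥ q) := by
    simpa only [dotProduct, sq] using Finset.sum_mul_sq_le_sq_mul_sq Finset.univ p q
  have hAM : 0 ≤ (p - q) ⬝ᵥ (p - q) := dotProduct_self_nonneg_s10 (p - q)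
  simp only [sub_dotProduct, dotProduct_sub, dotProduct_comm q p] at hAM
  rw [energy, energy, ← Real.sqrt_mul (by linarith [dotProduct_self_nonneg_s10 p])]
  exact (le_abs_self _).trans (Real.abs_le_sqrt (by nlinarith))

end Energy

lemma sTot_eq (p q : Fin 3 → ℝ) : sTot p q = 2 + 2 * (energy p * energy q - p ⬝ᵥ q) := by
  have hp := energy_sq p
  have hq := energy_sq q
  rw [sTot, ← energy, ← energy] at *
  simp only [add_dotProduct, dotProduct_add, dotProduct_comm q p]
  linear_combination hp + hq

lemma four_le_sTot (p q : Fin 3 → ℝ) : 4 ≤ sTot p q := by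
  rw [sTot_eq]; linarith [one_add_dotProduct_le_energy_mul p q]

lemma sTot_pos (p q : Fin 3 → ℝ) : 0 < sTot p q := by linarith [four_le_sTot p q]

lemma abs_inv_sTot_le_one (p q : Fin 3 → ℝ) : |(sTot p q)⁻¹| ≤ 1 := by
  rw [abs_inv, abs_of_pos (sTot_pos p q)]
  exact inv_le_one_of_one_le₀ (by linarith [four_le_sTot p q])

section PartialDeriv

variable {i : Fin 3} {f g : (Fin 3 → ℝ) → ℝ} {p : Fin 3 → ℝ}

lemma HasFDerivAt.pd_eq {f' : (Fin 3 → ℝ) →L[ℝ] ℝ} (h : HasFDerivAt f f' p) :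
    pd i f p = f' (Pi.single i 1) := by
  rw [pd, h.fderiv]

lemma pd_add (hf : DifferentiableAt ℝ f p) (hg : DifferentiableAt ℝ g p) :
    pd i (f + g) p = pd i f p + pd i g p :=
  (hf.hasFDerivAt.add hg.hasFDerivAt).pd_eq

lemma pd_mul (hf : DifferentiableAt ℝ f p) (hg : DifferentiableAt ℝ g p) :
    pd i (f * g) p = pd i f p * g p + f p * pd i g p := by
  rw [(hf.hasFDerivAt.mul hg.hasFDerivAt).pd_eq]
  simp only [pd, _root_.add_apply, _root_.smul_apply, smul_eq_mul]
  ring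

lemma pd_const (c : ℝ) : pd i (fun _ => c) p = 0 :=
  (hasFDerivAt_const c p).pd_eq

lemma pd_comp {φ : ℝ → ℝ} {φ' : ℝ} (hφ : HasDerivAt φ φ' (f p)) (hf : DifferentiableAt ℝ f p) :
    pd i (φ ∘ f) p = φ' * pd i f p :=
  (hφ.comp_hasFDerivAt p hf.hasFDerivAt).pd_eq

lemma pd_apply (j : Fin 3) : pd i (fun p => p j) p = (Pi.single i 1 : Fin 3 → ℝ) j :=
  (hasFDerivAt_apply j p).pd_eq

lemma pd_dotProduct_right (q : Fin 3 → ℝ) : pd i (· ⬝ᵥ q) p = q i := by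
  have h := HasFDerivAt.fun_sum (u := Finset.univ) fun j _ =>
    (hasFDerivAt_apply (𝕜 := ℝ) j p).mul_const (q j)
  change pd i (fun y => ∑ j, y j * q j) p = q i
  rw [h.pd_eq]
  simp [Pi.single_apply]

lemma pd_one_add_dotProduct_self : pd i (fun p => 1 + p ⬝ᵥ p) p = 2 * p i := by
  have h := (HasFDerivAt.fun_sum (u := Finset.univ) fun j _ =>
    (hasFDerivAt_apply (𝕜 := ℝ) j p).fun_mul (hasFDerivAt_apply (𝕜 := ℝ) j p)).const_add 1
  change pd i (fun y => 1 + ∑ j, y j * y j) p = 2 * p i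
  rw [h.pd_eq]
  simp only [Finset.sum_add_distrib, _root_.add_apply, _root_.sum_apply, _root_.smul_apply,
    ContinuousLinearMap.proj_apply, Pi.single_apply, smul_eq_mul, mul_ite, mul_one, mul_zero,
    Finset.sum_ite_eq', Finset.mem_univ, ↓reduceIte]
  ring

lemma pd_inv (hf : DifferentiableAt ℝ f p) (h0 : f p ≠ 0) :
    pd i (fun x => (f x)⁻¹) p = -(f p)⁻¹ * (f p)⁻¹ * pd i f p := by
  rw [show (fun x => (f x)⁻¹) = Inv.inv ∘ f from rfl, pd_comp (hasDerivAt_inv h0) hf]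
  ring

lemma pd_inv_sqrt (hf : DifferentiableAt ℝ f p) (h0 : 0 < f p) :
    pd i (fun x => (√(f x))⁻¹) p = -(√(f p))⁻¹ * (f p)⁻¹ * pd i f p / 2 := by
  have hsqrt : HasDerivAt (fun x => (√x)⁻¹) (-(√(f p) ^ 2)⁻¹ * (1 / (2 * √(f p)))) (f p) :=
    (hasDerivAt_inv (Real.sqrt_pos.2 h0).ne').comp _ (Real.hasDerivAt_sqrt h0.ne')
  rw [show (fun x => (√(f x))⁻¹) = (fun x => (√x)⁻¹) ∘ f from rfl, pd_comp hsqrt hf,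
    Real.sq_sqrt h0.le]
  ring

lemma differentiableAt_one_add_dotProduct_self :
    DifferentiableAt ℝ (fun p : Fin 3 → ℝ => 1 + p ⬝ᵥ p) p := by
  unfold dotProduct; fun_prop

lemma differentiable_energy : Differentiable ℝ (energy : (Fin 3 → ℝ) → ℝ) := fun p =>
  differentiableAt_one_add_dotProduct_self.sqrt (one_add_dotProduct_self_pos p).ne'

lemma pd_energy : pd i energy p = velocity p i := by
  rw [show energy = Real.sqrt ∘ (fun p : Fin 3 → ℝ => 1 + p ⬝ᵥ p) from rfl,
    pd_comp (Real.hasDerivAt_sqrt (one_add_dotProduct_self_pos p).ne')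
      differentiableAt_one_add_dotProduct_self, pd_one_add_dotProduct_self, velocity, energy]
  field_simp

lemma pd_inv_energy :
    pd i (fun p => (energy p)⁻¹) p = -(energy p)⁻¹ * (energy p)⁻¹ * velocity p i := by
  rw [pd_inv (differentiable_energy p) (energy_pos p).ne', pd_energy]

lemma pd_velocity (j : Fin 3) :
    pd i (fun p => velocity p j) p
      = ((Pi.single i 1 : Fin 3 → ℝ) j - velocity p i * velocity p j) * (energy p)⁻¹ := by
  have hinv : DifferentiableAt ℝ (fun p => (energy p)⁻¹) p :=
    (differentiable_energy p).inv (energy_pos p).ne'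
  rw [show (fun p => velocity p j) = (fun p => p j) * (fun p => (energy p)⁻¹) from
      funext fun p => div_eq_mul_inv _ _,
    pd_mul (differentiableAt_apply j p) hinv, pd_apply, pd_inv_energy]
  simp only [velocity]
  ring

lemma sTot_left_eq (q : Fin 3 → ℝ) :
    (sTot · q) = fun p => 2 + 2 * (energy p * energy q - p ⬝ᵥ q) :=
  funext fun p => sTot_eq p q

lemma differentiable_sTot_left (q : Fin 3 → ℝ) : Differentiable ℝ (sTot · q) := by
  have := differentiable_energy
  rw [sTot_left_eq]
  unfold dotProduct
  fun_prop

lemma pd_sTot_left (q : Fin 3 → ℝ) :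
    pd i (sTot · q) p = 2 * energy q * (velocity p i - velocity q i) := by
  have hdot : HasFDerivAt (· ⬝ᵥ q) (fderiv ℝ (· ⬝ᵥ q) p) p := by
    refine DifferentiableAt.hasFDerivAt ?_
    unfold dotProduct; fun_prop
  have h := ((((differentiable_energy p).hasFDerivAt.mul_const (energy q)).fun_sub hdot).const_mul
    2).const_add 2
  rw [sTot_left_eq, h.pd_eq]
  change 2 * (energy q * pd i energy p - pd i (· ⬝ᵥ q) p) = _
  rw [pd_energy, pd_dotProduct_right, velocity, velocity]
  field_simp [(energy_pos q).ne']

end PartialDeriv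

lemma pd_inv_sqrt_sTot_left (i : Fin 3) (p q : Fin 3 → ℝ) :
    pd i (fun p => (√(sTot p q))⁻¹) p
      = energy q * (√(sTot p q))⁻¹ * (-(sTot p q)⁻¹ * (velocity p i - velocity q i)) := by
  rw [pd_inv_sqrt (differentiable_sTot_left q p) (sTot_pos p q), pd_sTot_left]
  ring

lemma differentiable_inv_sqrt_sTot_left (q : Fin 3 → ℝ) :
    Differentiable ℝ fun p => (√(sTot p q))⁻¹ := fun p =>
  ((differentiable_sTot_left q p).sqrt (sTot_pos p q).ne').inv
    (Real.sqrt_pos.2 (sTot_pos p q)).ne'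

-- Families are indexed by `q` first, so that `f q` is the function of `p` that `pd` differentiates.
def symbolGenerators : Set ((Fin 3 → ℝ) → (Fin 3 → ℝ) → ℝ) :=
  {fun q p => (sTot p q)⁻¹, fun q _ => (energy q)⁻¹, fun _ p => (energy p)⁻¹} ∪
    Set.range (fun j q _ => velocity q j) ∪ Set.range (fun j _ p => velocity p j)

def symbolAlgebra : Subalgebra ℝ ((Fin 3 → ℝ) → (Fin 3 → ℝ) → ℝ) :=
  Algebra.adjoin ℝ symbolGenerators

def scaledPd (i : Fin 3) (f : (Fin 3 → ℝ) → (Fin 3 → ℝ) → ℝ) :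
    (Fin 3 → ℝ) → (Fin 3 → ℝ) → ℝ :=
  fun q p => (energy q)⁻¹ * pd i (f q) p

section Symbols

variable {i : Fin 3} {f g : (Fin 3 → ℝ) → (Fin 3 → ℝ) → ℝ}

lemma inv_sTot_mem_symbolAlgebra : (fun q p => (sTot p q)⁻¹) ∈ symbolAlgebra :=
  Algebra.subset_adjoin (by simp [symbolGenerators])

lemma inv_energy_left_mem_symbolAlgebra :
    (fun q (_ : Fin 3 → ℝ) => (energy q)⁻¹) ∈ symbolAlgebra :=
  Algebra.subset_adjoin (by simp [symbolGenerators])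

lemma inv_energy_right_mem_symbolAlgebra : (fun _ p => (energy p)⁻¹) ∈ symbolAlgebra :=
  Algebra.subset_adjoin (by simp [symbolGenerators])

lemma velocity_left_mem_symbolAlgebra (j : Fin 3) :
    (fun q (_ : Fin 3 → ℝ) => velocity q j) ∈ symbolAlgebra :=
  Algebra.subset_adjoin (by simp [symbolGenerators])

lemma velocity_right_mem_symbolAlgebra (j : Fin 3) :
    (fun _ p => velocity p j) ∈ symbolAlgebra :=
  Algebra.subset_adjoin (by simp [symbolGenerators])

lemma pd_eq_energy_mul_scaledPd (q p : Fin 3 → ℝ) :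
    pd i (f q) p = energy q * scaledPd i f q p := by
  rw [scaledPd, mul_inv_cancel_left₀ (energy_pos q).ne']

lemma scaledPd_add (hf : ∀ q, Differentiable ℝ (f q)) (hg : ∀ q, Differentiable ℝ (g q)) :
    scaledPd i (f + g) = scaledPd i f + scaledPd i g := by
  ext q p
  simp only [scaledPd, Pi.add_apply, pd_add (hf q p) (hg q p)]
  ring

lemma scaledPd_mul (hf : ∀ q, Differentiable ℝ (f q)) (hg : ∀ q, Differentiable ℝ (g q)) :
    scaledPd i (f * g) = scaledPd i f * g + f * scaledPd i g := by
  ext q p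
  simp only [scaledPd, Pi.add_apply, Pi.mul_apply, pd_mul (hf q p) (hg q p)]
  ring

lemma abs_le_one_of_mem_symbolGenerators (hf : f ∈ symbolGenerators) (q p : Fin 3 → ℝ) :
    |f q p| ≤ 1 := by
  rcases hf with ((rfl | rfl | rfl) | ⟨j, rfl⟩) | ⟨j, rfl⟩
  · exact abs_inv_sTot_le_one p q
  · exact abs_inv_energy_le_one q
  · exact abs_inv_energy_le_one p
  · exact abs_velocity_le_one q j
  · exact abs_velocity_le_one p j

lemma exists_bound_of_mem_symbolAlgebra (hf : f ∈ symbolAlgebra) :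
    ∃ C > 0, ∀ q p, |f q p| ≤ C := by
  induction hf using Algebra.adjoin_induction with
  | mem f hf => exact ⟨1, one_pos, abs_le_one_of_mem_symbolGenerators hf⟩
  | algebraMap r => exact ⟨|r| + 1, by positivity, fun q p => by simp⟩
  | add f g _ _ hf hg =>
    obtain ⟨C, hC, hfC⟩ := hf
    obtain ⟨D, hD, hgD⟩ := hg
    exact ⟨C + D, by positivity, fun q p =>
      (abs_add_le _ _).trans (add_le_add (hfC q p) (hgD q p))⟩
  | mul f g _ _ hf hg =>
    obtain ⟨C, hC, hfC⟩ := hf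
    obtain ⟨D, hD, hgD⟩ := hg
    refine ⟨C * D, by positivity, fun q p => ?_⟩
    rw [Pi.mul_apply, Pi.mul_apply, abs_mul]
    exact mul_le_mul (hfC q p) (hgD q p) (abs_nonneg _) hC.le

lemma differentiable_of_mem_symbolGenerators (hf : f ∈ symbolGenerators) (q : Fin 3 → ℝ) :
    Differentiable ℝ (f q) := by
  rcases hf with ((rfl | rfl | rfl) | ⟨j, rfl⟩) | ⟨j, rfl⟩
  · exact (differentiable_sTot_left q).inv fun p => (sTot_pos p q).ne'
  · exact differentiable_const _
  · exact differentiable_energy.inv fun p => (energy_pos p).ne'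
  · exact differentiable_const _
  · exact fun p =>
      (differentiableAt_apply j p).mul ((differentiable_energy p).inv (energy_pos p).ne')

lemma differentiable_of_mem_symbolAlgebra (hf : f ∈ symbolAlgebra) (q : Fin 3 → ℝ) :
    Differentiable ℝ (f q) := by
  induction hf using Algebra.adjoin_induction with
  | mem f hf => exact differentiable_of_mem_symbolGenerators hf q
  | algebraMap r => exact differentiable_const r
  | add f g _ _ hf hg => exact hf.add hg
  | mul f g _ _ hf hg => exact hf.mul hg

lemma scaledPd_mem_of_mem_symbolGenerators (hf : f ∈ symbolGenerators) :
    scaledPd i f ∈ symbolAlgebra := by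
  have hu := inv_sTot_mem_symbolAlgebra
  have hwq := inv_energy_left_mem_symbolAlgebra
  have hwp := inv_energy_right_mem_symbolAlgebra
  have hvq := velocity_left_mem_symbolAlgebra i
  have hvp := velocity_right_mem_symbolAlgebra
  rcases hf with ((rfl | rfl | rfl) | ⟨j, rfl⟩) | ⟨j, rfl⟩
  · have h : scaledPd i (fun q p => (sTot p q)⁻¹) = (-2 : ℝ) • ((fun q p => (sTot p q)⁻¹) *
        (fun q p => (sTot p q)⁻¹) * ((fun _ p => velocity p i) - fun q _ => velocity q i)) := by
      ext q p
      simp only [scaledPd, pd_inv (differentiable_sTot_left q p) (sTot_pos p q).ne', pd_sTot_left,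
        Pi.smul_apply, Pi.mul_apply, Pi.sub_apply, smul_eq_mul]
      field_simp [(energy_pos q).ne']
    rw [h]
    exact Subalgebra.smul_mem _ (mul_mem (mul_mem hu hu) (sub_mem (hvp i) hvq)) _
  · rw [show scaledPd i (fun q _ => (energy q)⁻¹) = 0 by ext; simp [scaledPd, pd_const]]
    exact zero_mem _
  · have h : scaledPd i (fun _ p => (energy p)⁻¹) = -((fun q (_ : Fin 3 → ℝ) => (energy q)⁻¹) *
        (fun _ p => (energy p)⁻¹) * (fun _ p => (energy p)⁻¹) * fun _ p => velocity p i) := by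
      ext q p
      simp only [scaledPd, pd_inv_energy, Pi.neg_apply, Pi.mul_apply]
      ring
    rw [h]
    exact neg_mem (mul_mem (mul_mem (mul_mem hwq hwp) hwp) (hvp i))
  · rw [show scaledPd i (fun q _ => velocity q j) = 0 by ext; simp [scaledPd, pd_const]]
    exact zero_mem _
  · have h : scaledPd i (fun _ p => velocity p j) = (fun q (_ : Fin 3 → ℝ) => (energy q)⁻¹) *
        (algebraMap ℝ _ ((Pi.single i 1 : Fin 3 → ℝ) j) -
          (fun _ p => velocity p i) * (fun _ p => velocity p j)) * (fun _ p => (energy p)⁻¹) := by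
      ext q p
      simp only [scaledPd, pd_velocity, Pi.mul_apply, Pi.sub_apply, Pi.algebraMap_apply,
        Algebra.algebraMap_self, RingHom.id_apply]
      ring
    rw [h]
    exact mul_mem (mul_mem hwq (sub_mem (Subalgebra.algebraMap_mem _ _)
      (mul_mem (hvp i) (hvp j)))) hwp

lemma scaledPd_mem_symbolAlgebra (hf : f ∈ symbolAlgebra) : scaledPd i f ∈ symbolAlgebra := by
  induction hf using Algebra.adjoin_induction with
  | mem f hf => exact scaledPd_mem_of_mem_symbolGenerators hf
  | algebraMap r =>
    rw [show scaledPd i (algebraMap ℝ _ r) = 0 by ext; exact mul_eq_zero_of_right _ (pd_const r)]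
    exact zero_mem _
  | add f g hf hg hf' hg' =>
    rw [scaledPd_add (differentiable_of_mem_symbolAlgebra hf)
      (differentiable_of_mem_symbolAlgebra hg)]
    exact add_mem hf' hg'
  | mul f g hf hg hf' hg' =>
    rw [scaledPd_mul (differentiable_of_mem_symbolAlgebra hf)
      (differentiable_of_mem_symbolAlgebra hg)]
    exact add_mem (mul_mem hf' hg) (mul_mem hf hg')

end Symbols

def IsSymbolOfOrder (k : ℕ) (h : (Fin 3 → ℝ) → (Fin 3 → ℝ) → ℝ) : Prop :=
  ∃ g ∈ symbolAlgebra, h = fun q p => energy q ^ k * (√(sTot p q))⁻¹ * g q p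

lemma isSymbolOfOrder_zero_inv_sqrt_sTot : IsSymbolOfOrder 0 fun q p => (√(sTot p q))⁻¹ :=
  ⟨1, one_mem _, by simp⟩

namespace IsSymbolOfOrder

variable {k : ℕ} {h : (Fin 3 → ℝ) → (Fin 3 → ℝ) → ℝ}

lemma pd (hh : IsSymbolOfOrder k h) (i : Fin 3) :
    IsSymbolOfOrder (k + 1) fun q => _root_.pd i (h q) := by
  obtain ⟨g, hg, rfl⟩ := hh
  refine ⟨-((fun q p => (sTot p q)⁻¹) * ((fun _ p => velocity p i) - fun q _ => velocity q i)) * g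
    + scaledPd i g, add_mem (mul_mem (neg_mem (mul_mem inv_sTot_mem_symbolAlgebra
      (sub_mem (velocity_right_mem_symbolAlgebra i) (velocity_left_mem_symbolAlgebra i)))) hg)
      (scaledPd_mem_symbolAlgebra hg), ?_⟩
  ext q p
  have hF := differentiable_inv_sqrt_sTot_left q
  have hg' := differentiable_of_mem_symbolAlgebra hg q
  change _root_.pd i ((fun _ => energy q ^ k) * (fun p => (√(sTot p q))⁻¹) * g q) p = _
  rw [pd_mul ((differentiableAt_const _).mul (hF p)) (hg' p),
    pd_mul (differentiableAt_const _) (hF p),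
    pd_const, pd_inv_sqrt_sTot_left, pd_eq_energy_mul_scaledPd]
  simp only [Pi.mul_apply, Pi.add_apply, Pi.neg_apply, Pi.sub_apply]
  ring

lemma iterate_pd (hh : IsSymbolOfOrder k h) (i : Fin 3) (n : ℕ) :
    IsSymbolOfOrder (k + n) fun q => (_root_.pd i)^[n] (h q) := by
  induction n with
  | zero => exact hh
  | succ n ih =>
    simp only [Function.iterate_succ_apply']
    exact ih.pd i

lemma exists_bound (hh : IsSymbolOfOrder k h) :
    ∃ C > 0, ∀ q p, |h q p| ≤ C * energy q ^ k * (√(sTot p q))⁻¹ := by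
  obtain ⟨g, hg, rfl⟩ := hh
  obtain ⟨C, hC, hgC⟩ := exists_bound_of_mem_symbolAlgebra hg
  refine ⟨C, hC, fun q p => ?_⟩
  have hw : 0 ≤ energy q ^ k * (√(sTot p q))⁻¹ := by
    have := energy_pos q
    positivity
  rw [abs_mul, abs_of_nonneg hw, mul_comm, mul_assoc]
  exact mul_le_mul_of_nonneg_right (hgC q p) hw

end IsSymbolOfOrder

/-- **Derivatives of `s^{−1/2}`**: for every multi-index `A` there is `C > 0` with
`|∂^A_p [s(p,q)^{−1/2}]| ≤ C (q⁰)^{|A|} s(p,q)^{−1/2}` for all `p, q ∈ ℝ³`. -/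
theorem multiDeriv_inv_sqrt_sTot (A : Fin 3 → ℕ) :
    ∃ C > 0, ∀ p q : Fin 3 → ℝ,
      |multiDeriv A (fun x => (Real.sqrt (sTot x q))⁻¹) p|
        ≤ C * Real.sqrt (1 + q ⬝ᵥ q) ^ (∑ i, A i) * (Real.sqrt (sTot p q))⁻¹ := by
  obtain ⟨C, hC, hbound⟩ := (((isSymbolOfOrder_zero_inv_sqrt_sTot.iterate_pd 2 (A 2)).iterate_pd
    1 (A 1)).iterate_pd 0 (A 0)).exists_bound
  refine ⟨C, hC, fun p q => ?_⟩
  rw [Fin.sum_univ_three, show A 0 + A 1 + A 2 = 0 + A 2 + A 1 + A 0 by ring]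
  exact hbound q p

end
end

section
/- Let t₀∈ℝ and let t↦g(t) be a C¹ family of symmetric positive-definite real 3×3 matrices on [t₀,∞). Set k(t)=½g'(t), H(t)=(1/3)tr(g(t)^{−1}k(t)), σ(t)=k(t)−H(t)g(t), and F(t)=tr((g(t)^{−1}σ(t))²)/(4H(t)²). Assume H(t)>0 and F(t)<1/4 for all t≥t₀. Then: (i) for every fixed p∈ℝ³ with p≠0, the function t ↦ p⁰(t) := √(1+pᵀg(t)^{−1}p) is strictly decreasing on [t₀,∞); (ii) if in addition there are constants c₀, H₀ with pᵀg(t)^{−1}p ≤ c₀|p|² for all p and t, and H(t) ≤ H₀ for all t, then there is a constant C>0 with |∂_t p⁰(t)| ≤ C√(1+|p|²) for all t≥t₀ and p∈ℝ³. -/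
open Matrix

noncomputable section

/-- The Hubble variable `H = (1/3) tr(g⁻¹ k)` built from a metric `g` and a
second fundamental form `k`. -/
def hubble (g k : Matrix (Fin 3) (Fin 3) ℝ) : ℝ := Matrix.trace (g⁻¹ * k) / 3

/-- The trace-free part `σ = k − H g` of the second fundamental form. -/
def shear (g k : Matrix (Fin 3) (Fin 3) ℝ) : Matrix (Fin 3) (Fin 3) ℝ :=
  k - hubble g k • g

/-- The scaled shear `F = σ_{ab}σ^{ab}/(4H²) = tr((g⁻¹σ)²)/(4H²)`. -/
def scaledShear (g k : Matrix (Fin 3) (Fin 3) ℝ) : ℝ :=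
  Matrix.trace ((g⁻¹ * shear g k) * (g⁻¹ * shear g k)) / (4 * (hubble g k)^2)

/-! With `q = g⁻¹p` one has `∂ₜp⁰ = -qᵀkq / p⁰`. Writing `k = σ + H g` and `g = BᵀB`, the
substitution `w = Bq` and Cauchy–Schwarz give `|qᵀσq| ≤ √(tr((g⁻¹σ)²)) qᵀgq = 2H√F qᵀgq < H qᵀgq`
since `F < 1/4`. Hence `0 < qᵀkq ≤ 2H qᵀgq` for `q ≠ 0`: the lower bound makes `p⁰` strictly
decreasing, and the upper bound together with `qᵀgq = pᵀg⁻¹p` and `x / √(1 + x) ≤ √x` gives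
`|∂ₜp⁰| ≤ 2H₀√c₀ √(1 + |p|²)`. -/

-- Matrices carry no global norm; `hasFDerivAt_ringInverse` needs one, and any norm induces the
-- product topology, which is all that the derivatives stated below depend on.
attribute [local instance] Matrix.linftyOpNormedAddCommGroup Matrix.linftyOpNormedSpace
  Matrix.linftyOpNormedRing Matrix.linftyOpNormedAlgebra

section MatrixAnalysis

variable {n : Type*} [Fintype n]

theorem Matrix.hasDerivWithinAt_iff_entries {f : ℝ → Matrix n n ℝ} {f' : Matrix n n ℝ}
    {s : Set ℝ} {t : ℝ} :
    HasDerivWithinAt f f' s t ↔ ∀ i j, HasDerivWithinAt (fun x => f x i j) (f' i j) s t := by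
  let e : Matrix n n ℝ ≃L[ℝ] (n → n → ℝ) :=
    (Matrix.ofLinearEquiv ℝ).symm.toContinuousLinearEquiv
  refine ⟨fun h i j => ?_, fun h => ?_⟩
  · exact hasDerivWithinAt_pi.1
      (hasDerivWithinAt_pi.1 (e.hasFDerivAt.comp_hasDerivWithinAt t h) i) j
  · exact e.symm.hasFDerivAt.comp_hasDerivWithinAt t
      (hasDerivWithinAt_pi.2 fun i => hasDerivWithinAt_pi.2 (h i))

theorem HasDerivWithinAt.matrix_inv [DecidableEq n] {f : ℝ → Matrix n n ℝ} {f' : Matrix n n ℝ}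
    {s : Set ℝ} {t : ℝ} (hf : HasDerivWithinAt f f' s t) (hft : IsUnit (f t)) :
    HasDerivWithinAt (fun x => (f x)⁻¹) (-((f t)⁻¹ * f' * (f t)⁻¹)) s t := by
  obtain ⟨u, hu⟩ := hft
  have h := (hasFDerivAt_ringInverse (𝕜 := ℝ) u).comp_hasDerivWithinAt_of_eq t hf hu
  simp only [nonsing_inv_eq_ringInverse, ← hu, Ring.inverse_unit]
  exact h.congr_deriv (by simp)

theorem HasDerivWithinAt.dotProduct_mulVec {f : ℝ → Matrix n n ℝ} {f' : Matrix n n ℝ}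
    {s : Set ℝ} {t : ℝ} (hf : HasDerivWithinAt f f' s t) (v : n → ℝ) :
    HasDerivWithinAt (fun x => v ⬝ᵥ (f x *ᵥ v)) (v ⬝ᵥ (f' *ᵥ v)) s t := by
  have hentries := Matrix.hasDerivWithinAt_iff_entries.1 hf
  exact HasDerivWithinAt.fun_sum fun i _ => (HasDerivWithinAt.fun_sum fun j _ =>
    (hentries i j).mul_const (v j)).const_mul (v i)

theorem Matrix.IsSymm.of_hasDerivWithinAt {f : ℝ → Matrix n n ℝ} {f' : Matrix n n ℝ}
    {s : Set ℝ} {t : ℝ} (hsymm : ∀ x ∈ s, (f x).IsSymm) (hs : UniqueDiffWithinAt ℝ s t)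
    (ht : t ∈ s) (hf : HasDerivWithinAt f f' s t) : f'.IsSymm := by
  have hentries := Matrix.hasDerivWithinAt_iff_entries.1 hf
  have hf' : HasDerivWithinAt f f'ᵀ s t :=
    (Matrix.hasDerivWithinAt_iff_entries.2 fun i j => hentries j i).congr
      (fun x hx => (hsymm x hx).symm) (hsymm t ht).symm
  exact hs.eq_deriv s hf' hf

end MatrixAnalysis

section QuadraticForms

variable {n : Type*} [Fintype n]

open scoped MatrixOrder in
theorem Matrix.PosDef.exists_eq_transpose_mul_self [DecidableEq n] {g : Matrix n n ℝ}
    (hg : g.PosDef) : ∃ B : Matrix n n ℝ, IsUnit B ∧ g = Bᵀ * B := by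
  obtain ⟨B, rfl⟩ := CStarAlgebra.nonneg_iff_eq_star_mul_self.mp hg.posSemidef.nonneg
  exact ⟨B, isUnit_of_mul_isUnit_right hg.isUnit, rfl⟩

theorem Matrix.trace_mul_self_eq_sum_sq {M : Matrix n n ℝ} (hM : M.IsSymm) :
    trace (M * M) = ∑ i, ∑ j, M i j ^ 2 := by
  simp only [trace, diag_apply, mul_apply]
  exact Finset.sum_congr rfl fun i _ => Finset.sum_congr rfl fun j _ => by
    rw [hM.apply i j, sq]

theorem Matrix.sq_dotProduct_mulVec_le {M : Matrix n n ℝ} (hM : M.IsSymm) (w : n → ℝ) :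
    (w ⬝ᵥ (M *ᵥ w)) ^ 2 ≤ trace (M * M) * (w ⬝ᵥ w) ^ 2 := by
  have hcs := Finset.sum_mul_sq_le_sq_mul_sq Finset.univ
    (fun q : n × n => M q.1 q.2) (fun q => w q.1 * w q.2)
  simp only [Finset.univ_product_univ.symm, Finset.sum_product] at hcs
  have hquad : w ⬝ᵥ (M *ᵥ w) = ∑ i, ∑ j, M i j * (w i * w j) := by
    simp only [dotProduct, mulVec, Finset.mul_sum]
    exact Finset.sum_congr rfl fun i _ => Finset.sum_congr rfl fun j _ => by ring
  have hnorm : (w ⬝ᵥ w) ^ 2 = ∑ i, ∑ j, (w i * w j) ^ 2 := by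
    simp only [dotProduct, sq, Finset.sum_mul_sum]
    exact Finset.sum_congr rfl fun i _ => Finset.sum_congr rfl fun j _ => by ring
  rwa [hquad, hnorm, trace_mul_self_eq_sum_sq hM]

theorem Matrix.abs_dotProduct_mulVec_le_sqrt_trace [DecidableEq n] {g σ : Matrix n n ℝ}
    (hg : g.PosDef) (hσ : σ.IsSymm) (q : n → ℝ) :
    |q ⬝ᵥ (σ *ᵥ q)| ≤ √(trace ((g⁻¹ * σ) * (g⁻¹ * σ))) * (q ⬝ᵥ (g *ᵥ q)) := by
  obtain ⟨B, hB, rfl⟩ := hg.exists_eq_transpose_mul_self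
  have hCB : B⁻¹ * B = 1 := nonsing_inv_mul B ((isUnit_iff_isUnit_det B).mp hB)
  set M := B⁻¹ᵀ * σ * B⁻¹
  have hM : M.IsSymm := by
    simp only [M, IsSymm, transpose_mul, transpose_transpose, hσ.eq, mul_assoc]
  have htrace : trace (((Bᵀ * B)⁻¹ * σ) * ((Bᵀ * B)⁻¹ * σ)) = trace (M * M) := by
    rw [mul_inv_rev, ← transpose_nonsing_inv]
    simp only [M, mul_assoc]
    rw [trace_mul_comm B⁻¹]
    simp only [mul_assoc]
  have hσq : (B *ᵥ q) ⬝ᵥ (M *ᵥ (B *ᵥ q)) = q ⬝ᵥ (σ *ᵥ q) := by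
    have hMB : M *ᵥ (B *ᵥ q) = B⁻¹ᵀ *ᵥ (σ *ᵥ q) := by
      simp only [M, mulVec_mulVec, mul_assoc, hCB, mul_one]
    rw [hMB, dotProduct_mulVec, vecMul_transpose, mulVec_mulVec, hCB, one_mulVec]
  have hgq : q ⬝ᵥ ((Bᵀ * B) *ᵥ q) = (B *ᵥ q) ⬝ᵥ (B *ᵥ q) := by
    rw [← mulVec_mulVec, dotProduct_mulVec, vecMul_transpose]
  rw [htrace, ← hσq, hgq]
  have hw : 0 ≤ (B *ᵥ q) ⬝ᵥ (B *ᵥ q) := by simpa using dotProduct_star_self_nonneg (B *ᵥ q)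
  refine abs_le_of_sq_le_sq ?_ (mul_nonneg (Real.sqrt_nonneg _) hw)
  have htrace_nonneg : 0 ≤ trace (M * M) := by
    rw [trace_mul_self_eq_sum_sq hM]
    exact Finset.sum_nonneg fun i _ => Finset.sum_nonneg fun j _ => sq_nonneg _
  rw [mul_pow, Real.sq_sqrt htrace_nonneg]
  exact sq_dotProduct_mulVec_le hM _

theorem Matrix.PosDef.pos_of_dotProduct_mulVec_le [Nonempty n]
    {A : Matrix n n ℝ} {c : ℝ} (hA : A.PosDef) (h : ∀ p, p ⬝ᵥ (A *ᵥ p) ≤ c * (p ⬝ᵥ p)) : 0 < c := by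
  have hp : (fun _ => 1 : n → ℝ) ≠ 0 := Function.ne_iff.2 ⟨Classical.arbitrary n, one_ne_zero⟩
  have hquad : 0 < (fun _ => 1 : n → ℝ) ⬝ᵥ (A *ᵥ fun _ => 1) := by
    simpa using hA.dotProduct_mulVec_pos hp
  exact pos_of_mul_pos_left (hquad.trans_le (h _)) (by simp [dotProduct])

end QuadraticForms

theorem Real.div_sqrt_one_add_le_sqrt {x : ℝ} (hx : 0 ≤ x) : x / √(1 + x) ≤ √x := by
  rw [div_le_iff₀ (Real.sqrt_pos.2 (by linarith))]
  calc x = √x * √x := (Real.mul_self_sqrt hx).symm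
    _ ≤ √x * √(1 + x) := by gcongr; linarith

section MassShell

variable {n : Type*} [Fintype n] [DecidableEq n]

def massShellEnergy (g : Matrix n n ℝ) (p : n → ℝ) : ℝ := √(1 + p ⬝ᵥ (g⁻¹ *ᵥ p))

/-- `∂ₜp⁰ = -k^{ab}pₐp_b / p⁰` when `k = ½ġ`. -/
def massShellEnergyRate (g k : Matrix n n ℝ) (p : n → ℝ) : ℝ :=
  -((g⁻¹ *ᵥ p) ⬝ᵥ (k *ᵥ (g⁻¹ *ᵥ p))) / massShellEnergy g p

theorem Matrix.PosDef.dotProduct_inv_mulVec_nonneg {g : Matrix n n ℝ} (hg : g.PosDef)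
    (p : n → ℝ) : 0 ≤ p ⬝ᵥ (g⁻¹ *ᵥ p) := by
  simpa using hg.inv.posSemidef.dotProduct_mulVec_nonneg p

theorem massShellEnergy_pos {g : Matrix n n ℝ} (hg : g.PosDef) (p : n → ℝ) :
    0 < massShellEnergy g p :=
  Real.sqrt_pos.2 (by linarith [hg.dotProduct_inv_mulVec_nonneg p])

theorem hasDerivWithinAt_massShellEnergy {g : ℝ → Matrix n n ℝ} {g' : Matrix n n ℝ}
    {s : Set ℝ} {t : ℝ} (hg : HasDerivWithinAt g g' s t) (hpos : (g t).PosDef) (p : n → ℝ) :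
    HasDerivWithinAt (fun x => massShellEnergy (g x) p)
      (massShellEnergyRate (g t) ((1 / 2 : ℝ) • g') p) s t := by
  set q := (g t)⁻¹ *ᵥ p
  have hinvSymm : ((g t)⁻¹).IsSymm := isHermitian_iff_isSymm.1 hpos.inv.isHermitian
  have hquad : p ⬝ᵥ (-((g t)⁻¹ * g' * (g t)⁻¹) *ᵥ p) = -(q ⬝ᵥ (g' *ᵥ q)) := by
    rw [neg_mulVec, dotProduct_neg, ← mulVec_mulVec, ← mulVec_mulVec, dotProduct_mulVec,
      ← hinvSymm.eq, vecMul_transpose, hinvSymm.eq]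
  have h := ((hg.matrix_inv hpos.isUnit).dotProduct_mulVec p).const_add 1 |>.sqrt
    (add_pos_of_pos_of_nonneg one_pos (hpos.dotProduct_inv_mulVec_nonneg p)).ne'
  rw [hquad] at h
  refine h.congr_deriv ?_
  simp only [massShellEnergyRate, smul_mulVec, dotProduct_smul, smul_eq_mul, massShellEnergy, q]
  ring

theorem massShellEnergyRate_neg {g k : Matrix n n ℝ} (hg : g.PosDef) (hk : k.PosDef)
    {p : n → ℝ} (hp : p ≠ 0) : massShellEnergyRate g k p < 0 := by
  have hq : g⁻¹ *ᵥ p ≠ 0 := fun h =>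
    hp (mulVec_injective_iff_isUnit.2 hg.inv.isUnit (h.trans (mulVec_zero _).symm))
  refine div_neg_of_neg_of_pos (neg_neg_of_pos ?_) (massShellEnergy_pos hg p)
  simpa using hk.dotProduct_mulVec_pos hq

theorem abs_massShellEnergyRate_le {g k : Matrix n n ℝ} {K : ℝ} (hg : g.PosDef) (hK : 0 ≤ K)
    (hk : ∀ q, |q ⬝ᵥ (k *ᵥ q)| ≤ K * (q ⬝ᵥ (g *ᵥ q))) (p : n → ℝ) :
    |massShellEnergyRate g k p| ≤ K * √(p ⬝ᵥ (g⁻¹ *ᵥ p)) := by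
  have hφ := hg.dotProduct_inv_mulVec_nonneg p
  have hgq : (g⁻¹ *ᵥ p) ⬝ᵥ (g *ᵥ (g⁻¹ *ᵥ p)) = p ⬝ᵥ (g⁻¹ *ᵥ p) := by
    rw [mulVec_mulVec, mul_nonsing_inv _ ((isUnit_iff_isUnit_det g).mp hg.isUnit), one_mulVec,
      dotProduct_comm]
  rw [massShellEnergyRate, abs_div, abs_neg, abs_of_pos (massShellEnergy_pos hg p)]
  calc |(g⁻¹ *ᵥ p) ⬝ᵥ (k *ᵥ (g⁻¹ *ᵥ p))| / massShellEnergy g p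
      ≤ K * (p ⬝ᵥ (g⁻¹ *ᵥ p)) / massShellEnergy g p := by
        rw [← hgq]
        exact div_le_div_of_nonneg_right (hk _) (massShellEnergy_pos hg p).le
    _ = K * ((p ⬝ᵥ (g⁻¹ *ᵥ p)) / √(1 + p ⬝ᵥ (g⁻¹ *ᵥ p))) := mul_div_assoc _ _ _
    _ ≤ K * √(p ⬝ᵥ (g⁻¹ *ᵥ p)) := by gcongr; exact Real.div_sqrt_one_add_le_sqrt hφ

end MassShell

section BianchiI

variable {g k : Matrix (Fin 3) (Fin 3) ℝ}

theorem sqrt_trace_lt_hubble (hH : 0 < hubble g k) (hF : scaledShear g k < 1 / 4) :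
    √(trace ((g⁻¹ * shear g k) * (g⁻¹ * shear g k))) < hubble g k := by
  rw [scaledShear, div_lt_iff₀ (by positivity)] at hF
  exact (Real.sqrt_lt' hH).2 (by linarith)

theorem abs_dotProduct_mulVec_sub_hubble_le (hg : g.PosDef) (hk : k.IsSymm) (q : Fin 3 → ℝ) :
    |q ⬝ᵥ (k *ᵥ q) - hubble g k * (q ⬝ᵥ (g *ᵥ q))| ≤
      √(trace ((g⁻¹ * shear g k) * (g⁻¹ * shear g k))) * (q ⬝ᵥ (g *ᵥ q)) := by
  have hσ : (shear g k).IsSymm := hk.sub ((isHermitian_iff_isSymm.1 hg.isHermitian).smul _)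
  convert abs_dotProduct_mulVec_le_sqrt_trace hg hσ q using 2
  rw [shear, sub_mulVec, dotProduct_sub, smul_mulVec, dotProduct_smul, smul_eq_mul]

theorem posDef_of_scaledShear_lt (hg : g.PosDef) (hk : k.IsSymm) (hH : 0 < hubble g k)
    (hF : scaledShear g k < 1 / 4) : k.PosDef := by
  refine .of_dotProduct_mulVec_pos (isHermitian_iff_isSymm.2 hk) fun q hq => ?_
  have hgq : 0 < q ⬝ᵥ (g *ᵥ q) := by simpa using hg.dotProduct_mulVec_pos hq
  have hbound := abs_le.1 (abs_dotProduct_mulVec_sub_hubble_le hg hk q)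
  have hgap := mul_lt_mul_of_pos_right (sqrt_trace_lt_hubble hH hF) hgq
  simp only [star_trivial]
  linarith [hbound.1]

theorem abs_dotProduct_mulVec_le_two_hubble (hg : g.PosDef) (hk : k.IsSymm)
    (hH : 0 < hubble g k) (hF : scaledShear g k < 1 / 4) (q : Fin 3 → ℝ) :
    |q ⬝ᵥ (k *ᵥ q)| ≤ 2 * hubble g k * (q ⬝ᵥ (g *ᵥ q)) := by
  have hgq : 0 ≤ q ⬝ᵥ (g *ᵥ q) := by simpa using hg.posSemidef.dotProduct_mulVec_nonneg q
  have hbound := abs_le.1 (abs_dotProduct_mulVec_sub_hubble_le hg hk q)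
  have hgap := mul_le_mul_of_nonneg_right (sqrt_trace_lt_hubble hH hF).le hgq
  rw [abs_le]
  constructor <;> linarith [mul_nonneg hH.le hgq]

end BianchiI

theorem energy_monotone_and_bounded_general
    (t₀ : ℝ) (g g' : ℝ → Matrix (Fin 3) (Fin 3) ℝ)
    (hpos : ∀ t ∈ Set.Ici t₀, (g t).PosDef)
    (hderiv : ∀ t ∈ Set.Ici t₀, ∀ a b,
      HasDerivWithinAt (fun s => g s a b) (g' t a b) (Set.Ici t₀) t)
    (hH : ∀ t ∈ Set.Ici t₀, 0 < hubble (g t) ((1/2 : ℝ) • g' t))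
    (hF : ∀ t ∈ Set.Ici t₀, scaledShear (g t) ((1/2 : ℝ) • g' t) < 1/4) :
    (∀ p : Fin 3 → ℝ, p ≠ 0 →
      StrictAntiOn (fun t => Real.sqrt (1 + p ⬝ᵥ ((g t)⁻¹ *ᵥ p))) (Set.Ici t₀)) ∧
    (∀ c₀ H₀ : ℝ,
      (∀ t ∈ Set.Ici t₀, ∀ p : Fin 3 → ℝ, p ⬝ᵥ ((g t)⁻¹ *ᵥ p) ≤ c₀ * (p ⬝ᵥ p)) →
      (∀ t ∈ Set.Ici t₀, hubble (g t) ((1/2 : ℝ) • g' t) ≤ H₀) →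
      ∃ C > 0, ∀ t ∈ Set.Ici t₀, ∀ p : Fin 3 → ℝ,
        |derivWithin (fun s => Real.sqrt (1 + p ⬝ᵥ ((g s)⁻¹ *ᵥ p))) (Set.Ici t₀) t|
          ≤ C * Real.sqrt (1 + p ⬝ᵥ p)) := by
  have hg : ∀ t ∈ Set.Ici t₀, HasDerivWithinAt g (g' t) (Set.Ici t₀) t :=
    fun t ht => hasDerivWithinAt_iff_entries.2 (hderiv t ht)
  have hk : ∀ t ∈ Set.Ici t₀, ((1/2 : ℝ) • g' t).IsSymm := fun t ht =>
    (IsSymm.of_hasDerivWithinAt (fun s hs => isHermitian_iff_isSymm.1 (hpos s hs).isHermitian)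
      (uniqueDiffOn_Ici t₀ t ht) ht (hg t ht)).smul _
  have henergy := fun t ht p => hasDerivWithinAt_massShellEnergy (hg t ht) (hpos t ht) p
  refine ⟨fun p hp => ?_, fun c₀ H₀ hc₀ hH₀ => ?_⟩
  · change StrictAntiOn (fun t => massShellEnergy (g t) p) _
    refine strictAntiOn_of_hasDerivWithinAt_neg (convex_Ici t₀)
      (fun t ht => (henergy t ht p).continuousWithinAt)
      (fun t ht => (henergy t (interior_subset ht) p).mono interior_subset) fun t ht => ?_
    replace ht := interior_subset ht
    exact massShellEnergyRate_neg (hpos t ht)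
      (posDef_of_scaledShear_lt (hpos t ht) (hk t ht) (hH t ht) (hF t ht)) hp
  · have hH₀pos : 0 < H₀ := (hH t₀ Set.self_mem_Ici).trans_le (hH₀ t₀ Set.self_mem_Ici)
    have hc₀pos : 0 < c₀ :=
      (hpos t₀ Set.self_mem_Ici).inv.pos_of_dotProduct_mulVec_le (hc₀ t₀ Set.self_mem_Ici)
    refine ⟨2 * H₀ * √c₀, by positivity, fun t ht p => ?_⟩
    change |derivWithin (fun s => massShellEnergy (g s) p) _ t| ≤ _
    rw [(henergy t ht p).derivWithin (uniqueDiffOn_Ici t₀ t ht)]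
    calc |massShellEnergyRate (g t) ((1/2 : ℝ) • g' t) p|
        ≤ 2 * hubble (g t) ((1/2 : ℝ) • g' t) * √(p ⬝ᵥ ((g t)⁻¹ *ᵥ p)) :=
          abs_massShellEnergyRate_le (hpos t ht) (by linarith [hH t ht])
            (abs_dotProduct_mulVec_le_two_hubble (hpos t ht) (hk t ht) (hH t ht) (hF t ht)) p
      _ ≤ 2 * H₀ * √(c₀ * (1 + p ⬝ᵥ p)) := by
          gcongr
          · exact hH₀ t ht
          exact (hc₀ t ht p).trans (mul_le_mul_of_nonneg_left (by linarith) hc₀pos.le)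
      _ = 2 * H₀ * √c₀ * √(1 + p ⬝ᵥ p) := by rw [Real.sqrt_mul hc₀pos.le]; ring

/-- **Monotonicity and boundedness of `p⁰` along a Bianchi I metric**: if `g(t)` is a
C¹ family of symmetric positive-definite metrics with `k = ½ġ`, `H > 0` and scaled
shear `F < 1/4`, then (i) for every `p ≠ 0` the energy `p⁰(t) = √(1 + pᵀg(t)⁻¹p)` is
strictly decreasing, and (ii) if moreover `pᵀg(t)⁻¹p ≤ c₀|p|²` and `H ≤ H₀`, then
`|∂_t p⁰| ≤ C√(1+|p|²)` for a constant `C`. -/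
theorem energy_monotone_and_bounded
    (t₀ : ℝ) (g g' : ℝ → Matrix (Fin 3) (Fin 3) ℝ)
    (hsymm : ∀ t ∈ Set.Ici t₀, (g t).IsSymm)
    (hpos : ∀ t ∈ Set.Ici t₀, (g t).PosDef)
    (hderiv : ∀ t ∈ Set.Ici t₀, ∀ a b,
      HasDerivWithinAt (fun s => g s a b) (g' t a b) (Set.Ici t₀) t)
    (hcont : ∀ a b, ContinuousOn (fun t => g' t a b) (Set.Ici t₀))
    (hH : ∀ t ∈ Set.Ici t₀, 0 < hubble (g t) ((1/2 : ℝ) • g' t))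
    (hF : ∀ t ∈ Set.Ici t₀, scaledShear (g t) ((1/2 : ℝ) • g' t) < 1/4) :
    (∀ p : Fin 3 → ℝ, p ≠ 0 →
      StrictAntiOn (fun t => Real.sqrt (1 + p ⬝ᵥ ((g t)⁻¹ *ᵥ p))) (Set.Ici t₀)) ∧
    (∀ c₀ H₀ : ℝ,
      (∀ t ∈ Set.Ici t₀, ∀ p : Fin 3 → ℝ, p ⬝ᵥ ((g t)⁻¹ *ᵥ p) ≤ c₀ * (p ⬝ᵥ p)) →
      (∀ t ∈ Set.Ici t₀, hubble (g t) ((1/2 : ℝ) • g' t) ≤ H₀) →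
      ∃ C > 0, ∀ t ∈ Set.Ici t₀, ∀ p : Fin 3 → ℝ,
        |derivWithin (fun s => Real.sqrt (1 + p ⬝ᵥ ((g s)⁻¹ *ᵥ p))) (Set.Ici t₀) t|
          ≤ C * Real.sqrt (1 + p ⬝ᵥ p)) :=
  energy_monotone_and_bounded_general t₀ g g' hpos hderiv hH hF

end
end
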